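/- Assume: (R-bound) |r x s a| ≤ R_max for all x, s, a; (R-Lip) |r x₁ s a − r x₂ s a| ≤ C_r · ‖x₁ − x₂‖ for all x₁, x₂, s, a; (P-Lip) ∑_{s'} |P x₁ s a s' − P x₂ s a s'| ≤ C_P · ‖x₁ − x₂‖ for all x₁, x₂, s, a. Set B_V = (R_max + τ · log |A|) / (1 − γ). For each x let V_x : S → ℝ satisfy 𝒯_x V_x = V_x, and define the optimal soft Q-value Q_x(s,a) = r x s a + γ · ∑_{s'} P x s a s' · V_x(s'). Then for all x₁, x₂ and all s, a: |Q_{x₁}(s,a) − Q_{x₂}(s,a)| ≤ ( C_r + γ · (C_r + γ · C_P · B_V)/(1 − γ) + γ · C_P · B_V ) · ‖x₁ − x₂‖. -/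

import Mathlib

/-!
The soft maximum `f ↦ τ log ∑ₐ exp (f a / τ)` is monotone and commutes with adding constants, so it
is 1-Lipschitz for the sup norm; as it equals `τ log |A|` at `f = 0`, it is bounded by
`‖f‖ + τ log |A|`. A fixed point `V` of the soft Bellman operator therefore satisfies
`‖V‖ ≤ R_max + τ log |A| + γ ‖V‖`, i.e. `‖V‖ ≤ B_V`. Splitting
`P₁ V₁ - P₂ V₂ = (P₁ - P₂) V₁ + P₂ (V₁ - V₂)`, two fixed points satisfy
`‖V₁ - V₂‖ ≤ (C_r + γ C_P B_V) ‖x₁ - x₂‖ + γ ‖V₁ - V₂‖`, and the same one-step estimate for `Q`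
gives the bound.
-/

open scoped BigOperators

noncomputable section

variable {S A X : Type*} [Fintype S] [Fintype A]
  [NormedAddCommGroup X] [NormedSpace ℝ X]

/-- Softmax (entropy-regularized) Bellman optimality operator. -/
def softBellman (r : X → S → A → ℝ) (P : X → S → A → S → ℝ)
    (γ τ : ℝ) (x : X) (V : S → ℝ) (s : S) : ℝ :=
  τ * Real.log (∑ a, Real.exp ((r x s a + γ * ∑ s', P x s a s' * V s') / τ))

def logSumExp (τ : ℝ) (f : A → ℝ) : ℝ :=
  τ * Real.log (∑ a, Real.exp (f a / τ))

def softQ (r : S → A → ℝ) (P : S → A → S → ℝ) (γ : ℝ) (V : S → ℝ) (s : S) (a : A) : ℝ :=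
  r s a + γ * ∑ s', P s a s' * V s'

theorem le_div_one_sub_of_le_add_mul {t c γ : ℝ} (hγ : γ < 1) (h : t ≤ c + γ * t) :
    t ≤ c / (1 - γ) := by
  rw [le_div_iff₀ (by linarith)]
  linarith

theorem logSumExp_zero (τ : ℝ) : logSumExp τ (0 : A → ℝ) = τ * Real.log (Fintype.card A) := by
  simp [logSumExp]

section LogSumExp

variable [Nonempty A] {τ : ℝ}

theorem logSumExp_add_const (hτ : τ ≠ 0) (f : A → ℝ) (c : ℝ) :
    logSumExp τ (fun a => f a + c) = logSumExp τ f + c := by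
  have hsum : ∑ a, Real.exp ((f a + c) / τ) = Real.exp (c / τ) * ∑ a, Real.exp (f a / τ) := by
    rw [Finset.mul_sum]
    refine Finset.sum_congr rfl fun a _ => ?_
    rw [← Real.exp_add, add_div, add_comm]
  have hpos : 0 < ∑ a, Real.exp (f a / τ) :=
    Finset.sum_pos (fun _ _ => Real.exp_pos _) Finset.univ_nonempty
  rw [logSumExp, logSumExp, hsum, Real.log_mul (Real.exp_ne_zero _) hpos.ne', Real.log_exp]
  field_simp
  ring

theorem logSumExp_mono (hτ : 0 < τ) : Monotone (logSumExp (A := A) τ) := by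
  intro f g hfg
  unfold logSumExp
  gcongr with a
  exact hfg a

theorem abs_logSumExp_sub_logSumExp_le (hτ : 0 < τ) (f g : A → ℝ) :
    |logSumExp τ f - logSumExp τ g| ≤ ‖f - g‖ := by
  have shift_le : ∀ f g : A → ℝ, logSumExp τ f ≤ logSumExp τ g + ‖f - g‖ := by
    intro f g
    rw [← logSumExp_add_const hτ.ne']
    refine logSumExp_mono hτ fun a => ?_
    have hfg : f a - g a ≤ ‖f - g‖ := (le_abs_self _).trans (norm_le_pi_norm (f - g) a)
    linarith
  rw [abs_sub_le_iff]
  constructor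
  · linarith [shift_le f g]
  · linarith [shift_le g f, norm_sub_rev f g]

theorem abs_logSumExp_le (hτ : 0 < τ) (f : A → ℝ) :
    |logSumExp τ f| ≤ ‖f‖ + τ * Real.log (Fintype.card A) := by
  have hlog : 0 ≤ τ * Real.log (Fintype.card A) :=
    mul_nonneg hτ.le (Real.log_nonneg (mod_cast Fintype.card_pos))
  have h := abs_logSumExp_sub_logSumExp_le hτ f 0
  rw [sub_zero, logSumExp_zero, abs_le] at h
  rw [abs_le]
  constructor <;> linarith [norm_nonneg f]

end LogSumExp

theorem abs_sum_mul_le_sum_abs_mul_norm (w V : S → ℝ) :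
    |∑ s, w s * V s| ≤ (∑ s, |w s|) * ‖V‖ := by
  calc |∑ s, w s * V s| ≤ ∑ s, |w s| * |V s| := by
        simpa only [abs_mul] using Finset.abs_sum_le_sum_abs (fun s => w s * V s) Finset.univ
    _ ≤ ∑ s, |w s| * ‖V‖ := by
        gcongr with s
        exact Real.norm_eq_abs (V s) ▸ norm_le_pi_norm V s
    _ = (∑ s, |w s|) * ‖V‖ := by rw [Finset.sum_mul]

theorem abs_sum_mul_le_norm {p : S → ℝ} (hp0 : ∀ s, 0 ≤ p s) (hp1 : ∑ s, p s = 1) (V : S → ℝ) :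
    |∑ s, p s * V s| ≤ ‖V‖ := by
  simpa [abs_of_nonneg (hp0 _), hp1] using abs_sum_mul_le_sum_abs_mul_norm p V

theorem abs_sum_mul_sub_sum_mul_le {p₁ p₂ : S → ℝ} (hp0 : ∀ s, 0 ≤ p₂ s) (hp1 : ∑ s, p₂ s = 1)
    (V₁ V₂ : S → ℝ) :
    |∑ s, p₁ s * V₁ s - ∑ s, p₂ s * V₂ s| ≤ (∑ s, |p₁ s - p₂ s|) * ‖V₁‖ + ‖V₁ - V₂‖ := by
  have hsplit : ∑ s, p₁ s * V₁ s - ∑ s, p₂ s * V₂ s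
      = ∑ s, (p₁ s - p₂ s) * V₁ s + ∑ s, p₂ s * (V₁ - V₂) s := by
    simp only [Pi.sub_apply, ← Finset.sum_sub_distrib, ← Finset.sum_add_distrib]
    exact Finset.sum_congr rfl fun s _ => by ring
  rw [hsplit]
  exact (abs_add_le _ _).trans (add_le_add (abs_sum_mul_le_sum_abs_mul_norm _ _)
    (abs_sum_mul_le_norm hp0 hp1 _))

section SoftQ

variable {γ : ℝ}

omit [Fintype A] in
theorem abs_softQ_le {r : S → A → ℝ} {P : S → A → S → ℝ} {s : S} {a : A} {Rmax : ℝ}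
    (hP0 : ∀ s', 0 ≤ P s a s') (hP1 : ∑ s', P s a s' = 1) (hγ : 0 ≤ γ) (hr : |r s a| ≤ Rmax)
    (V : S → ℝ) :
    |softQ r P γ V s a| ≤ Rmax + γ * ‖V‖ := by
  calc |softQ r P γ V s a| ≤ |r s a| + γ * |∑ s', P s a s' * V s'| :=
        (abs_add_le _ _).trans_eq (by rw [abs_mul, abs_of_nonneg hγ])
    _ ≤ Rmax + γ * ‖V‖ := by
        gcongr
        exact abs_sum_mul_le_norm hP0 hP1 V

omit [Fintype A] in
theorem abs_softQ_sub_softQ_le {r₁ r₂ : S → A → ℝ} {P₁ P₂ : S → A → S → ℝ} {V₁ V₂ : S → ℝ}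
    {s : S} {a : A} {εr εP B : ℝ} (hP0 : ∀ s', 0 ≤ P₂ s a s') (hP1 : ∑ s', P₂ s a s' = 1)
    (hγ : 0 ≤ γ) (hr : |r₁ s a - r₂ s a| ≤ εr) (hP : ∑ s', |P₁ s a s' - P₂ s a s'| ≤ εP)
    (hV₁ : ‖V₁‖ ≤ B) :
    |softQ r₁ P₁ γ V₁ s a - softQ r₂ P₂ γ V₂ s a| ≤ εr + γ * (εP * B + ‖V₁ - V₂‖) := by
  have hB : 0 ≤ B := (norm_nonneg _).trans hV₁
  calc |softQ r₁ P₁ γ V₁ s a - softQ r₂ P₂ γ V₂ s a|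
      = |(r₁ s a - r₂ s a) + γ * (∑ s', P₁ s a s' * V₁ s' - ∑ s', P₂ s a s' * V₂ s')| := by
        unfold softQ
        ring_nf
    _ ≤ |r₁ s a - r₂ s a| + γ * |∑ s', P₁ s a s' * V₁ s' - ∑ s', P₂ s a s' * V₂ s'| :=
        (abs_add_le _ _).trans_eq (by rw [abs_mul, abs_of_nonneg hγ])
    _ ≤ εr + γ * ((∑ s', |P₁ s a s' - P₂ s a s'|) * ‖V₁‖ + ‖V₁ - V₂‖) := by
        gcongr
        exact abs_sum_mul_sub_sum_mul_le hP0 hP1 V₁ V₂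
    _ ≤ εr + γ * (εP * B + ‖V₁ - V₂‖) := by
        gcongr
        exact (Finset.sum_nonneg fun _ _ => abs_nonneg _).trans hP

end SoftQ

section FixedPoint

variable [Nonempty S] [Nonempty A] {r r₁ r₂ : S → A → ℝ} {P P₁ P₂ : S → A → S → ℝ}
  {γ τ : ℝ} {V V₁ V₂ : S → ℝ}

theorem norm_le_of_logSumExp_softQ_eq (hP0 : ∀ s a s', 0 ≤ P s a s')
    (hP1 : ∀ s a, ∑ s', P s a s' = 1) (hγ0 : 0 ≤ γ) (hγ1 : γ < 1) (hτ : 0 < τ) {Rmax : ℝ}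
    (hr : ∀ s a, |r s a| ≤ Rmax) (hV : ∀ s, logSumExp τ (softQ r P γ V s) = V s) :
    ‖V‖ ≤ (Rmax + τ * Real.log (Fintype.card A)) / (1 - γ) := by
  refine le_div_one_sub_of_le_add_mul hγ1 ((pi_norm_le_iff_of_nonempty _).2 fun s => ?_)
  have hq : ‖softQ r P γ V s‖ ≤ Rmax + γ * ‖V‖ :=
    (pi_norm_le_iff_of_nonempty _).2 fun a => abs_softQ_le (hP0 s a) (hP1 s a) hγ0 (hr s a) V
  rw [Real.norm_eq_abs, ← hV s]
  linarith [abs_logSumExp_le hτ (softQ r P γ V s)]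

theorem norm_sub_le_of_logSumExp_softQ_eq (hP0 : ∀ s a s', 0 ≤ P₂ s a s')
    (hP1 : ∀ s a, ∑ s', P₂ s a s' = 1) (hγ0 : 0 ≤ γ) (hγ1 : γ < 1) (hτ : 0 < τ)
    {εr εP B : ℝ} (hr : ∀ s a, |r₁ s a - r₂ s a| ≤ εr)
    (hP : ∀ s a, ∑ s', |P₁ s a s' - P₂ s a s'| ≤ εP) (hV₁ : ‖V₁‖ ≤ B)
    (hfix₁ : ∀ s, logSumExp τ (softQ r₁ P₁ γ V₁ s) = V₁ s)
    (hfix₂ : ∀ s, logSumExp τ (softQ r₂ P₂ γ V₂ s) = V₂ s) :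
    ‖V₁ - V₂‖ ≤ (εr + γ * εP * B) / (1 - γ) := by
  refine le_div_one_sub_of_le_add_mul hγ1 ((pi_norm_le_iff_of_nonempty _).2 fun s => ?_)
  have hq : ‖softQ r₁ P₁ γ V₁ s - softQ r₂ P₂ γ V₂ s‖ ≤ εr + γ * (εP * B + ‖V₁ - V₂‖) :=
    (pi_norm_le_iff_of_nonempty _).2 fun a =>
      abs_softQ_sub_softQ_le (hP0 s a) (hP1 s a) hγ0 (hr s a) (hP s a) hV₁
  rw [Pi.sub_apply, Real.norm_eq_abs, ← hfix₁ s, ← hfix₂ s]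
  linarith [abs_logSumExp_sub_logSumExp_le hτ (softQ r₁ P₁ γ V₁ s) (softQ r₂ P₂ γ V₂ s)]

end FixedPoint

theorem soft_q_value_lipschitz_in_parameter_general
    (r : X → S → A → ℝ) (P : X → S → A → S → ℝ)
    (hP0 : ∀ x s a s', 0 ≤ P x s a s')
    (hP1 : ∀ x s a, ∑ s', P x s a s' = 1)
    (γ : ℝ) (hγ0 : 0 < γ) (hγ1 : γ < 1)
    (τ : ℝ) (hτ : 0 < τ)
    (Rmax : ℝ) (hr : ∀ x s a, |r x s a| ≤ Rmax)
    (Cr CP : ℝ)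
    (hrLip : ∀ x₁ x₂ s a, |r x₁ s a - r x₂ s a| ≤ Cr * ‖x₁ - x₂‖)
    (hPLip : ∀ x₁ x₂ s a, (∑ s', |P x₁ s a s' - P x₂ s a s'|) ≤ CP * ‖x₁ - x₂‖)
    (BV : ℝ) (hBV : BV = (Rmax + τ * Real.log (Fintype.card A)) / (1 - γ))
    (V : X → S → ℝ)
    (hfix : ∀ x s, softBellman r P γ τ x (V x) s = V x s)
    (Q : X → S → A → ℝ)
    (hQ : ∀ x s a, Q x s a = r x s a + γ * ∑ s', P x s a s' * V x s') :
    ∀ (x₁ x₂ : X) (s : S) (a : A),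
      |Q x₁ s a - Q x₂ s a| ≤
        (Cr + γ * (Cr + γ * CP * BV) / (1 - γ) + γ * CP * BV) * ‖x₁ - x₂‖ := by
  intro x₁ x₂ s a
  have : Nonempty S := ⟨s⟩
  have : Nonempty A := ⟨a⟩
  -- `hfix x` is the fixed-point equation `logSumExp τ (softQ (r x) (P x) γ (V x) s) = V x s`.
  have hV₁ : ‖V x₁‖ ≤ BV :=
    hBV ▸ norm_le_of_logSumExp_softQ_eq (hP0 x₁) (hP1 x₁) hγ0.le hγ1 hτ (hr x₁) (hfix x₁)
  have hV : ‖V x₁ - V x₂‖ ≤ (Cr * ‖x₁ - x₂‖ + γ * (CP * ‖x₁ - x₂‖) * BV) / (1 - γ) :=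
    norm_sub_le_of_logSumExp_softQ_eq (hP0 x₂) (hP1 x₂) hγ0.le hγ1 hτ (hrLip x₁ x₂)
      (hPLip x₁ x₂) hV₁ (hfix x₁) (hfix x₂)
  calc |Q x₁ s a - Q x₂ s a|
      ≤ Cr * ‖x₁ - x₂‖ + γ * (CP * ‖x₁ - x₂‖ * BV + ‖V x₁ - V x₂‖) := by
        rw [hQ, hQ]
        exact abs_softQ_sub_softQ_le (hP0 x₂ s a) (hP1 x₂ s a) hγ0.le
          (hrLip x₁ x₂ s a) (hPLip x₁ x₂ s a) hV₁
    _ ≤ Cr * ‖x₁ - x₂‖ + γ * (CP * ‖x₁ - x₂‖ * BV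
          + (Cr * ‖x₁ - x₂‖ + γ * (CP * ‖x₁ - x₂‖) * BV) / (1 - γ)) := by
        gcongr
    _ = (Cr + γ * (Cr + γ * CP * BV) / (1 - γ) + γ * CP * BV) * ‖x₁ - x₂‖ := by
        field_simp [(by linarith : (1 - γ) ≠ 0)]
        ring

theorem soft_q_value_lipschitz_in_parameter
    [Nonempty S] [Nonempty A]
    (r : X → S → A → ℝ) (P : X → S → A → S → ℝ)
    (hP0 : ∀ x s a s', 0 ≤ P x s a s')
    (hP1 : ∀ x s a, ∑ s', P x s a s' = 1)
    (γ : ℝ) (hγ0 : 0 < γ) (hγ1 : γ < 1)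
    (τ : ℝ) (hτ : 0 < τ)
    (Rmax : ℝ) (hr : ∀ x s a, |r x s a| ≤ Rmax)
    (Cr CP : ℝ) (hCr : 0 ≤ Cr) (hCP : 0 ≤ CP)
    (hrLip : ∀ x₁ x₂ s a, |r x₁ s a - r x₂ s a| ≤ Cr * ‖x₁ - x₂‖)
    (hPLip : ∀ x₁ x₂ s a, (∑ s', |P x₁ s a s' - P x₂ s a s'|) ≤ CP * ‖x₁ - x₂‖)
    (BV : ℝ) (hBV : BV = (Rmax + τ * Real.log (Fintype.card A)) / (1 - γ))
    (V : X → S → ℝ)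
    (hfix : ∀ x s, softBellman r P γ τ x (V x) s = V x s)
    (Q : X → S → A → ℝ)
    (hQ : ∀ x s a, Q x s a = r x s a + γ * ∑ s', P x s a s' * V x s') :
    ∀ (x₁ x₂ : X) (s : S) (a : A),
      |Q x₁ s a - Q x₂ s a| ≤
        (Cr + γ * (Cr + γ * CP * BV) / (1 - γ) + γ * CP * BV) * ‖x₁ - x₂‖ :=
  soft_q_value_lipschitz_in_parameter_general r P hP0 hP1 γ hγ0 hγ1 τ hτ Rmax hr Cr CP hrLip hPLip
    BV hBV V hfix Q hQ
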